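/- arXiv:1505.00304 — 4 statements merged into one kernel-verified Lean document; each statement's English description precedes it below -/
import Mathlib

section
/- The function t \mapsto (F(t) - 1)/\sin(t/4), where F(t) = {}_2F_1(1/2, 1/2; 1; \sin^2(t/4)) = \sum_{m\ge 0} ((1/2)_m/m!)^2 \sin^{2m}(t/4), is positive and monotone increasing on (0, \pi]. -/
/-!
Writing `s = sin (t / 4)`, the quotient is `(F(s²) - 1) / s = ∑ aₘ₊₁ s^(2m+1)`, a power series in `s`
whose coefficients `aₘ = ((1/2)ₘ / m!)²` are positive and at most `1`. Such a series is positive and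
increasing on `(0, 1)`, and `t ↦ sin (t / 4)` maps `(0, π]` increasingly into `(0, 1)`.
-/

/-- The Gauss hypergeometric function ₂F₁(1/2, 1/2; 1; x) as a power series. -/
noncomputable def gaussF (x : ℝ) : ℝ :=
  ∑' m : ℕ, (((ascPochhammer ℝ m).eval (1 / 2 : ℝ)) / (Nat.factorial m : ℝ)) ^ 2 * x ^ m

open Real Set Polynomial

section Pochhammer

variable {S : Type*} [Semiring S] [PartialOrder S] [IsOrderedRing S]

theorem ascPochhammer_eval_nonneg (n : ℕ) {a : S} (ha : 0 ≤ a) :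
    0 ≤ (ascPochhammer S n).eval a := by
  induction n with
  | zero => simp
  | succ n ih =>
    rw [ascPochhammer_succ_eval]
    exact mul_nonneg ih (add_nonneg ha n.cast_nonneg)

theorem ascPochhammer_eval_le_eval (n : ℕ) {a b : S} (ha : 0 ≤ a) (hab : a ≤ b) :
    (ascPochhammer S n).eval a ≤ (ascPochhammer S n).eval b := by
  induction n with
  | zero => simp
  | succ n ih =>
    simp only [ascPochhammer_succ_eval]
    exact mul_le_mul ih (add_le_add_left hab _) (add_nonneg ha n.cast_nonneg)
      (ascPochhammer_eval_nonneg n (ha.trans hab))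

end Pochhammer

theorem summable_mul_pow_of_abs_le_one {c : ℕ → ℝ} (hc : ∀ m, |c m| ≤ 1) {e : ℕ → ℕ}
    (he : ∀ m, m ≤ e m) {x : ℝ} (hx : |x| < 1) : Summable fun m => c m * x ^ e m := by
  refine (summable_geometric_of_lt_one (abs_nonneg x) hx).of_norm_bounded fun m => ?_
  rw [Real.norm_eq_abs, abs_mul, abs_pow]
  calc |c m| * |x| ^ e m ≤ 1 * |x| ^ m :=
        mul_le_mul (hc m) (pow_le_pow_of_le_one (abs_nonneg x) hx.le (he m)) (by positivity)
          zero_le_one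
    _ = |x| ^ m := one_mul _

noncomputable def gaussCoeff (m : ℕ) : ℝ :=
  ((ascPochhammer ℝ m).eval (1 / 2 : ℝ) / (Nat.factorial m : ℝ)) ^ 2

theorem gaussCoeff_zero : gaussCoeff 0 = 1 := by
  simp [gaussCoeff]

theorem gaussCoeff_pos (m : ℕ) : 0 < gaussCoeff m := by
  unfold gaussCoeff
  have := ascPochhammer_pos m (1 / 2 : ℝ) one_half_pos
  positivity

theorem gaussCoeff_le_one (m : ℕ) : gaussCoeff m ≤ 1 := by
  have hfact : (0 : ℝ) < m.factorial := mod_cast m.factorial_pos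
  have hpoch : (ascPochhammer ℝ m).eval (1 / 2 : ℝ) ≤ m.factorial := by
    simpa using ascPochhammer_eval_le_eval m one_half_pos.le (one_half_lt_one (α := ℝ)).le
  refine pow_le_one₀ (div_nonneg (ascPochhammer_eval_nonneg m one_half_pos.le) hfact.le) ?_
  exact (div_le_one hfact).mpr hpoch

theorem abs_gaussCoeff_le_one (m : ℕ) : |gaussCoeff m| ≤ 1 := by
  rw [abs_of_pos (gaussCoeff_pos m)]
  exact gaussCoeff_le_one m

theorem gaussF_eq_tsum (x : ℝ) : gaussF x = ∑' m, gaussCoeff m * x ^ m := rfl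

noncomputable def gaussFTail (s : ℝ) : ℝ :=
  ∑' m : ℕ, gaussCoeff (m + 1) * s ^ (2 * m + 1)

theorem summable_gaussFTail {s : ℝ} (hs : |s| < 1) :
    Summable fun m : ℕ => gaussCoeff (m + 1) * s ^ (2 * m + 1) :=
  summable_mul_pow_of_abs_le_one (fun m => abs_gaussCoeff_le_one (m + 1)) (fun m => by omega) hs

theorem gaussF_sq_sub_one {s : ℝ} (hs : |s| < 1) : gaussF (s ^ 2) - 1 = s * gaussFTail s := by
  have hs2 : |s ^ 2| < 1 := by
    rw [abs_pow, sq_lt_one_iff₀ (abs_nonneg s)]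
    exact hs
  have hsum := summable_mul_pow_of_abs_le_one abs_gaussCoeff_le_one (fun _ => le_rfl) hs2
  rw [gaussF_eq_tsum, hsum.tsum_eq_zero_add, gaussFTail, ← tsum_mul_left, gaussCoeff_zero]
  simp only [pow_zero, mul_one, add_sub_cancel_left]
  exact tsum_congr fun m => by ring

theorem gaussF_sq_sub_one_div {s : ℝ} (hs0 : s ≠ 0) (hs : |s| < 1) :
    (gaussF (s ^ 2) - 1) / s = gaussFTail s := by
  rw [gaussF_sq_sub_one hs, mul_div_cancel_left₀ _ hs0]

theorem gaussFTail_pos {s : ℝ} (hs : s ∈ Ioo 0 1) : 0 < gaussFTail s := by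
  have hs_abs : |s| < 1 := by rw [abs_of_pos hs.1]; exact hs.2
  refine (summable_gaussFTail hs_abs).tsum_pos
    (fun m => mul_nonneg (gaussCoeff_pos _).le (pow_nonneg hs.1.le _)) 0 ?_
  simpa using mul_pos (gaussCoeff_pos 1) hs.1

theorem monotoneOn_gaussFTail : MonotoneOn gaussFTail (Ico 0 1) := by
  intro a ha b hb hab
  have habs {x : ℝ} (hx : x ∈ Ico (0 : ℝ) 1) : |x| < 1 := by rw [abs_of_nonneg hx.1]; exact hx.2
  refine (summable_gaussFTail (habs ha)).tsum_le_tsum (fun m => ?_) (summable_gaussFTail (habs hb))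
  exact mul_le_mul_of_nonneg_left (pow_le_pow_left₀ ha.1 hab _) (gaussCoeff_pos _).le

theorem sin_div_four_mem_Ioo {t : ℝ} (ht : t ∈ Ioc 0 π) : sin (t / 4) ∈ Ioo 0 1 := by
  obtain ⟨ht0, htπ⟩ := ht
  refine ⟨sin_pos_of_pos_of_lt_pi (by positivity) (by linarith), ?_⟩
  calc sin (t / 4) < sin (π / 2) :=
        sin_lt_sin_of_lt_of_le_pi_div_two (by linarith [pi_pos]) le_rfl (by linarith [pi_pos])
    _ = 1 := sin_pi_div_two

theorem monotoneOn_sin_div_four : MonotoneOn (fun t => sin (t / 4)) (Ioc 0 π) := by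
  intro a ha b hb hab
  exact strictMonoOn_sin.monotoneOn ⟨by linarith [ha.1, pi_pos], by linarith [ha.2, pi_pos]⟩
    ⟨by linarith [hb.1, pi_pos], by linarith [hb.2, pi_pos]⟩ (by linarith)

theorem varphi_minus_one_over_sin_pos_mono :
    (∀ t ∈ Set.Ioc (0 : ℝ) Real.pi,
        0 < (gaussF (Real.sin (t / 4) ^ 2) - 1) / Real.sin (t / 4)) ∧
      MonotoneOn (fun t : ℝ => (gaussF (Real.sin (t / 4) ^ 2) - 1) / Real.sin (t / 4))
        (Set.Ioc (0 : ℝ) Real.pi) := by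
  have hmaps : MapsTo (fun t => sin (t / 4)) (Ioc 0 π) (Ioo 0 1) :=
    fun t ht => sin_div_four_mem_Ioo ht
  have hquot : EqOn (fun t => (gaussF (sin (t / 4) ^ 2) - 1) / sin (t / 4))
      (gaussFTail ∘ fun t => sin (t / 4)) (Ioc 0 π) := fun t ht => by
    obtain ⟨hs0, hs1⟩ := hmaps ht
    exact gaussF_sq_sub_one_div hs0.ne' (by rw [abs_of_pos hs0]; exact hs1)
  refine ⟨fun t ht => (gaussFTail_pos (hmaps ht)).trans_eq (hquot ht).symm, ?_⟩
  exact (monotoneOn_gaussFTail.comp monotoneOn_sin_div_four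
    (hmaps.mono_right Ioo_subset_Ico_self)).congr hquot.symm
end

section
/- For all n \ge 0, with N = n+1, \pi G_n < \ln(16N) + \gamma, i.e. the zeroth truncation A_0(N) = \ln(16N) + \gamma is a strict upper bound for \pi G_n. -/
noncomputable def landauG (n : ℕ) : ℝ :=
  ∑ k ∈ Finset.range (n + 1), ((Nat.choose (2 * k) k : ℝ) / 4 ^ k) ^ 2

/-!
Write `r k = C(2k, k) / 4 ^ k` and `N = n + 1`. The sequence `log (16 N) - π G_n` is strictly
decreasing, since its decrements are `π r_N ^ 2 - log (1 + 1 / N)` and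
`log (1 + 1 / N) ≤ 1 / (N + 1 / 3) < π r_N ^ 2`; the second inequality holds because
`π r_k ^ 2 (k + 1 / 3)` decreases in `k` while `π r_k ^ 2 ≥ 2 / (2k + 1)`. Its limit is `-γ`:
since `π r_k ^ 2 - 2 / (2k + 1) = ∫₀^π r_k sin^{2k} x (1 - sin x) dx`, the binomial series
`∑ r_k y ^ k = (1 - y)^{-1/2}` at `y = sin² x` gives
`∑ (π r_k ^ 2 - 2 / (2k + 1)) = ∫₀^π |cos x| / (1 + sin x) dx = 2 log 2`,
and the remaining part `∑_{k<N} 2 / (2k + 1) = 2 H_{2N} - H_N` is `log (4N) + γ + o(1)`.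
-/

open Real Finset Filter Topology MeasureTheory

lemma log_one_add_le_three_mul_div {x : ℝ} (hx : 0 ≤ x) (hx3 : x ≤ 3) :
    log (1 + x) ≤ 3 * x / (3 + x) := by
  let g : ℝ → ℝ := fun t ↦ 3 * t / (3 + t) - log (1 + t)
  have hg' (t : ℝ) (ht : 0 ≤ t) : HasDerivAt g (t * (3 - t) / ((3 + t) ^ 2 * (1 + t))) t := by
    have := (((hasDerivAt_id t).const_mul 3).div ((hasDerivAt_id t).const_add 3)
      (by positivity)).sub (((hasDerivAt_id t).const_add 1).log (by positivity))
    refine this.congr_deriv ?_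
    simp only [id]
    field_simp
    ring
  have hmono : MonotoneOn g (Set.Icc 0 3) := by
    refine monotoneOn_of_deriv_nonneg (convex_Icc 0 3)
      (fun t ht ↦ (hg' t ht.1).continuousAt.continuousWithinAt) ?_ ?_ <;> rw [interior_Icc]
    · exact fun t ht ↦ (hg' t ht.1.le).differentiableAt.differentiableWithinAt
    · intro t ht
      rw [(hg' t ht.1.le).deriv]
      have := ht.1; have := ht.2
      apply div_nonneg <;> [nlinarith; positivity]
  simpa [g] using hmono ⟨le_rfl, by norm_num⟩ ⟨hx, hx3⟩ hx

noncomputable def centralBinomRatio (k : ℕ) : ℝ := ((2 * k).choose k : ℝ) / 4 ^ k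

lemma centralBinomRatio_pos (k : ℕ) : 0 < centralBinomRatio k := by
  have := Nat.centralBinom_pos k
  unfold centralBinomRatio
  positivity

lemma centralBinomRatio_succ (k : ℕ) :
    centralBinomRatio (k + 1) = centralBinomRatio k * ((2 * k + 1) / (2 * k + 2)) := by
  have h := Nat.succ_mul_centralBinom_succ k
  rw [Nat.centralBinom_eq_two_mul_choose, Nat.centralBinom_eq_two_mul_choose] at h
  have h' : ((k : ℝ) + 1) * ((2 * (k + 1)).choose (k + 1) : ℝ) =
      2 * (2 * k + 1) * ((2 * k).choose k : ℝ) := by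
    exact_mod_cast h
  unfold centralBinomRatio
  field_simp
  linear_combination 4 ^ k * 2 * h'

lemma prod_range_odd_div_even (n : ℕ) :
    ∏ i ∈ range n, (2 * (i : ℝ) + 1) / (2 * i + 2) = centralBinomRatio n := by
  induction n with
  | zero => simp [centralBinomRatio]
  | succ n ih => rw [prod_range_succ, ih, centralBinomRatio_succ]

lemma prod_range_even_div_odd (n : ℕ) :
    ∏ i ∈ range n, (2 * (i : ℝ) + 2) / (2 * i + 3) =
      1 / ((2 * n + 1) * centralBinomRatio n) := by
  induction n with
  | zero => simp [centralBinomRatio]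
  | succ n ih =>
    rw [prod_range_succ, ih, centralBinomRatio_succ]
    have := (centralBinomRatio_pos n).ne'
    push_cast
    field_simp
    ring

lemma integral_sin_pow_two_mul (k : ℕ) :
    ∫ x in 0..π, sin x ^ (2 * k) = π * centralBinomRatio k := by
  rw [integral_sin_pow_even, prod_range_odd_div_even]

lemma integral_sin_pow_two_mul_add_one (k : ℕ) :
    ∫ x in 0..π, sin x ^ (2 * k + 1) = 2 / ((2 * k + 1) * centralBinomRatio k) := by
  rw [integral_sin_pow_odd, prod_range_even_div_odd]
  ring

lemma two_div_le_pi_mul_centralBinomRatio_sq (k : ℕ) :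
    2 / (2 * k + 1) ≤ π * centralBinomRatio k ^ 2 := by
  have h := integral_sin_pow_succ_le (n := 2 * k)
  rw [integral_sin_pow_two_mul_add_one, integral_sin_pow_two_mul,
    div_le_iff₀ (by have := centralBinomRatio_pos k; positivity)] at h
  rw [div_le_iff₀ (by positivity)]
  linarith

lemma pi_mul_centralBinomRatio_sq_mul_succ (k : ℕ) :
    π * centralBinomRatio (k + 1) ^ 2 * ((k + 1 : ℕ) + 1 / 3) =
      π * centralBinomRatio k ^ 2 * (k + 1 / 3) * (1 - k / ((2 * k + 2) ^ 2 * (3 * k + 1))) := by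
  rw [centralBinomRatio_succ]
  push_cast
  field_simp
  ring

lemma antitone_pi_mul_centralBinomRatio_sq_mul :
    Antitone fun k : ℕ ↦ π * centralBinomRatio k ^ 2 * (k + 1 / 3) := by
  refine antitone_nat_of_succ_le fun k ↦ ?_
  rw [pi_mul_centralBinomRatio_sq_mul_succ]
  exact mul_le_of_le_one_right (by positivity) (sub_le_self _ (by positivity))

lemma one_le_pi_mul_centralBinomRatio_sq_mul (k : ℕ) :
    1 ≤ π * centralBinomRatio k ^ 2 * (k + 1 / 3) := by
  have hlim : Tendsto (fun m : ℕ ↦ 1 - 1 / ((m : ℝ) + 1)) atTop (𝓝 1) := by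
    simpa using tendsto_one_div_add_atTop_nhds_zero_nat.const_sub (1 : ℝ)
  refine le_of_tendsto hlim (eventually_ge_atTop k |>.mono fun m hm ↦ ?_)
  refine le_trans ?_ (antitone_pi_mul_centralBinomRatio_sq_mul hm)
  have := two_div_le_pi_mul_centralBinomRatio_sq m
  calc 1 - 1 / ((m : ℝ) + 1) ≤ 1 - 1 / (3 * (2 * m + 1)) := by gcongr; linarith
    _ = 2 / (2 * m + 1) * (m + 1 / 3) := by field_simp; ring
    _ ≤ π * centralBinomRatio m ^ 2 * (m + 1 / 3) := by gcongr

lemma one_lt_pi_mul_centralBinomRatio_sq_mul {k : ℕ} (hk : 0 < k) :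
    1 < π * centralBinomRatio k ^ 2 * (k + 1 / 3) := by
  calc 1 ≤ π * centralBinomRatio (k + 1) ^ 2 * ((k + 1 : ℕ) + 1 / 3) :=
        one_le_pi_mul_centralBinomRatio_sq_mul _
    _ < π * centralBinomRatio k ^ 2 * (k + 1 / 3) := by
      rw [pi_mul_centralBinomRatio_sq_mul_succ]
      have := centralBinomRatio_pos k
      exact mul_lt_of_lt_one_right (by positivity) (sub_lt_self _ (by positivity))

lemma ascPochhammer_eval_one_half (n : ℕ) :
    (ascPochhammer ℝ n).eval (1 / 2) = n.factorial * centralBinomRatio n := by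
  induction n with
  | zero => simp [centralBinomRatio]
  | succ n ih =>
    rw [ascPochhammer_succ_eval, ih, centralBinomRatio_succ]
    push_cast [Nat.factorial_succ]
    field_simp
    ring

lemma multichoose_one_half (n : ℕ) : Ring.multichoose (1 / 2 : ℝ) n = centralBinomRatio n := by
  have h := Ring.factorial_nsmul_multichoose_eq_ascPochhammer (1 / 2 : ℝ) n
  rw [Polynomial.ascPochhammer_smeval_eq_eval, ascPochhammer_eval_one_half, nsmul_eq_mul] at h
  exact mul_left_cancel₀ (by positivity) h

lemma hasSum_centralBinomRatio_mul_pow {y : ℝ} (hy : |y| < 1) :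
    HasSum (fun k ↦ centralBinomRatio k * y ^ k) (1 / √(1 - y)) := by
  have h := (one_div_one_sub_rpow_hasFPowerSeriesOnBall_zero (1 / 2)).hasSum
    (y := y) (by simpa [enorm_eq_nnnorm, ← NNReal.coe_lt_one] using hy)
  simp only [FormalMultilinearSeries.ofScalars_apply_eq, smul_eq_mul, zero_add] at h
  rw [sqrt_eq_rpow]
  simpa only [← Ring.multichoose_eq, multichoose_one_half] using h

lemma integral_centralBinomRatio_mul_sin_pow_mul_one_sub_sin (k : ℕ) :
    ∫ x in 0..π, centralBinomRatio k * sin x ^ (2 * k) * (1 - sin x) =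
      π * centralBinomRatio k ^ 2 - 2 / (2 * k + 1) := by
  have hcont (n : ℕ) :
      IntervalIntegrable (fun x ↦ centralBinomRatio k * sin x ^ n) volume 0 π := by
    apply Continuous.intervalIntegrable; fun_prop
  simp only [mul_one_sub, mul_assoc, ← pow_succ]
  rw [intervalIntegral.integral_sub (hcont _) (hcont _), intervalIntegral.integral_const_mul,
    intervalIntegral.integral_const_mul, integral_sin_pow_two_mul,
    integral_sin_pow_two_mul_add_one]
  have := (centralBinomRatio_pos k).ne'
  field_simp

lemma tendsto_sum_centralBinomRatio_mul_sin_pow {t : ℝ} (ht : 0 ≤ sin t) :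
    Tendsto (fun N ↦ ∑ k ∈ range N, centralBinomRatio k * sin t ^ (2 * k) * (1 - sin t)) atTop
      (𝓝 (|cos t| / (1 + sin t))) := by
  rcases (sin_le_one t).eq_or_lt with h1 | h1
  · have hcos : cos t = 0 := by nlinarith [sin_sq_add_cos_sq t]
    simp [h1, hcos]
  have hy : |sin t ^ 2| < 1 := by
    rw [abs_of_nonneg (sq_nonneg _)]; nlinarith
  have hcos : √(1 - sin t ^ 2) = |cos t| := by rw [← cos_sq', sqrt_sq_eq_abs]
  have hpos : 0 < |cos t| := by rw [← hcos]; apply sqrt_pos.2; nlinarith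
  have := ((hasSum_centralBinomRatio_mul_pow hy).mul_right (1 - sin t)).tendsto_sum_nat
  simp only [← pow_mul] at this
  convert this using 2
  rw [hcos, div_mul_eq_mul_div, one_mul, div_eq_div_iff (by positivity) hpos.ne', abs_mul_abs_self]
  nlinarith [sin_sq_add_cos_sq t]

lemma continuousOn_abs_cos_div_one_add_sin :
    ContinuousOn (fun x ↦ |cos x| / (1 + sin x)) (Set.Icc 0 π) :=
  continuous_cos.abs.continuousOn.div (by fun_prop) fun x hx ↦
    (by linarith [sin_nonneg_of_mem_Icc hx] : 1 + sin x ≠ 0)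

lemma integral_abs_cos_div_one_add_sin : ∫ x in 0..π, |cos x| / (1 + sin x) = 2 * log 2 := by
  have hint (a b : ℝ) (ha : 0 ≤ a) (hb : b ≤ π) (hab : a ≤ b) :
      IntervalIntegrable (fun x ↦ |cos x| / (1 + sin x)) volume a b :=
    (continuousOn_abs_cos_div_one_add_sin.mono <| by
      rw [Set.uIcc_of_le hab]; exact Set.Icc_subset_Icc ha hb).intervalIntegrable
  have hhalf : ∫ x in 0..π / 2, |cos x| / (1 + sin x) = log 2 := by
    have hderiv : ∀ x ∈ Set.uIcc 0 (π / 2),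
        HasDerivAt (fun t ↦ log (1 + sin t)) (|cos x| / (1 + sin x)) x := by
      intro x hx
      rw [Set.uIcc_of_le (by positivity)] at hx
      have hs : 0 ≤ sin x := sin_nonneg_of_nonneg_of_le_pi hx.1 (by linarith [hx.2, pi_pos])
      rw [abs_of_nonneg (cos_nonneg_of_mem_Icc ⟨by linarith [hx.1, pi_pos], hx.2⟩)]
      simpa using ((hasDerivAt_sin x).const_add 1).log (by positivity)
    rw [intervalIntegral.integral_eq_sub_of_hasDerivAt hderiv
      (hint _ _ le_rfl (by linarith [pi_pos]) (by positivity))]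
    norm_num
  have hreflect : ∫ x in π / 2..π, |cos x| / (1 + sin x) =
      ∫ x in 0..π / 2, |cos x| / (1 + sin x) := by
    have := intervalIntegral.integral_comp_sub_left (fun x ↦ |cos x| / (1 + sin x)) π
      (a := 0) (b := π / 2)
    simp only [sin_pi_sub, cos_pi_sub, abs_neg, sub_zero] at this
    rw [this, sub_half]
  rw [← intervalIntegral.integral_add_adjacent_intervals (b := π / 2)
    (hint _ _ le_rfl (by linarith [pi_pos]) (by positivity))
    (hint _ _ (by positivity) le_rfl (by linarith [pi_pos])), hreflect, hhalf]
  ring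

lemma hasSum_pi_mul_centralBinomRatio_sq_sub :
    HasSum (fun k : ℕ ↦ π * centralBinomRatio k ^ 2 - 2 / (2 * k + 1)) (2 * log 2) := by
  rw [hasSum_iff_tendsto_nat_of_nonneg
    fun k ↦ sub_nonneg.2 (two_div_le_pi_mul_centralBinomRatio_sq k)]
  let f (N : ℕ) (x : ℝ) : ℝ :=
    ∑ k ∈ range N, centralBinomRatio k * sin x ^ (2 * k) * (1 - sin x)
  have hf_cont (N : ℕ) : Continuous (f N) := by fun_prop
  have hf_integral (N : ℕ) :
      ∫ x in 0..π, f N x =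
        ∑ k ∈ range N, (π * centralBinomRatio k ^ 2 - 2 / (2 * k + 1)) := by
    rw [intervalIntegral.integral_finsetSum fun k _ ↦ by
      apply Continuous.intervalIntegrable; fun_prop]
    simp only [integral_centralBinomRatio_mul_sin_pow_mul_one_sub_sin]
  simp only [← hf_integral, ← integral_abs_cos_div_one_add_sin,
    intervalIntegral.integral_of_le pi_pos.le]
  have hsin : ∀ᵐ x ∂volume.restrict (Set.Ioc 0 π), 0 ≤ sin x :=
    ae_restrict_of_forall_mem measurableSet_Ioc fun x hx ↦
      sin_nonneg_of_nonneg_of_le_pi hx.1.le hx.2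
  refine integral_tendsto_of_tendsto_of_monotone (fun N ↦ (hf_cont N).integrableOn_Ioc) ?_ ?_ ?_
  · exact continuousOn_abs_cos_div_one_add_sin.integrableOn_Icc.mono_set Set.Ioc_subset_Icc_self
  · filter_upwards [hsin] with x hx
    refine monotone_nat_of_le_succ fun N ↦ ?_
    simp only [f, sum_range_succ, le_add_iff_nonneg_right]
    have := centralBinomRatio_pos N
    have : 0 ≤ 1 - sin x := sub_nonneg.2 (sin_le_one x)
    positivity
  · filter_upwards [hsin] with x hx
    exact tendsto_sum_centralBinomRatio_mul_sin_pow hx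

lemma sum_range_two_div_two_mul_add_one (N : ℕ) :
    ∑ k ∈ range N, (2 : ℝ) / (2 * k + 1) = 2 * harmonic (2 * N) - harmonic N := by
  induction N with
  | zero => simp
  | succ N ih =>
    rw [sum_range_succ, ih, show 2 * (N + 1) = 2 * N + 1 + 1 by ring, harmonic_succ,
      harmonic_succ, harmonic_succ]
    push_cast
    field_simp
    ring

lemma pi_mul_landauG_eq (n : ℕ) :
    π * landauG n = ∑ k ∈ range (n + 1), (π * centralBinomRatio k ^ 2 - 2 / (2 * k + 1)) +
      (2 * harmonic (2 * (n + 1)) - harmonic (n + 1)) := by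
  rw [← sum_range_two_div_two_mul_add_one, ← sum_add_distrib, landauG, mul_sum]
  simp [centralBinomRatio]

lemma tendsto_log_sub_pi_mul_landauG :
    Tendsto (fun n : ℕ ↦ log (16 * ((n : ℝ) + 1)) - π * landauG n) atTop
      (𝓝 (-eulerMascheroniConstant)) := by
  have hN : Tendsto (fun n : ℕ ↦ n + 1) atTop atTop := tendsto_add_atTop_nat 1
  have h2N : Tendsto (fun n : ℕ ↦ 2 * (n + 1)) atTop atTop :=
    tendsto_atTop_mono (fun n ↦ by omega) hN
  have := ((hasSum_pi_mul_centralBinomRatio_sq_sub.tendsto_sum_nat.comp hN).const_sub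
    (2 * log 2)).sub (((tendsto_harmonic_sub_log.comp h2N).const_mul 2).sub
      (tendsto_harmonic_sub_log.comp hN))
  convert this using 1
  · ext n
    simp only [Function.comp_apply, pi_mul_landauG_eq]
    push_cast
    rw [log_mul (by norm_num) (by positivity), log_mul (by norm_num) (by positivity),
      show (16 : ℝ) = 2 ^ 4 by norm_num, log_pow]
    push_cast
    ring
  · congr 1
    ring

lemma strictAnti_log_sub_pi_mul_landauG :
    StrictAnti fun n : ℕ ↦ log (16 * ((n : ℝ) + 1)) - π * landauG n := by
  refine strictAnti_nat_of_succ_lt fun n ↦ ?_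
  set N : ℝ := (n : ℝ) + 1
  have hN : 1 ≤ N := by simp [N]
  have hlog : log (16 * (N + 1)) - log (16 * N) = log (1 + 1 / N) := by
    rw [← log_div (by positivity) (by positivity)]
    congr 1
    field_simp
  have hbound : log (1 + 1 / N) ≤ 1 / (N + 1 / 3) := by
    calc log (1 + 1 / N) ≤ 3 * (1 / N) / (3 + 1 / N) :=
          log_one_add_le_three_mul_div (by positivity)
            (by rw [div_le_iff₀ (by positivity)]; linarith)
      _ = 1 / (N + 1 / 3) := by field_simp
  have hwallis : 1 / (N + 1 / 3) < π * centralBinomRatio (n + 1) ^ 2 := by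
    rw [div_lt_iff₀ (by positivity)]
    simpa [N] using one_lt_pi_mul_centralBinomRatio_sq_mul n.succ_pos
  have hG : landauG (n + 1) = landauG n + centralBinomRatio (n + 1) ^ 2 := by
    simp only [landauG, sum_range_succ (n := n + 1), centralBinomRatio]
  push_cast
  rw [hG]
  linarith

theorem landau_upper_bound_order_zero (n : ℕ) :
    Real.pi * landauG n <
      Real.log (16 * ((n : ℝ) + 1)) + Real.eulerMascheroniConstant := by
  have h := strictAnti_log_sub_pi_mul_landauG.antitone.le_of_tendsto
    tendsto_log_sub_pi_mul_landauG (n + 1)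
  have := strictAnti_log_sub_pi_mul_landauG (lt_add_one n)
  simp only at h this
  linarith
end

section
/- For all n \ge 0, with N = n+1, \ln(16N) + \gamma - 1/(4N) < \pi G_n, i.e. the first truncation A_1(N) = \ln(16N) + \gamma - 1/(4N) is a strict lower bound for \pi G_n. -/
/-!
Write `c k = (2k choose k) / 4 ^ k`, so that `π G n = ∑_{k ≤ n} π (c k)²`, and put
`a k = 1 / (k + 1) - π (c (k + 1))²`. Then
`π G n - log (16 (n + 1)) + 1 / (4 (n + 1)) = (π - log 16 - ∑_{k < n} a k) + (H n - log (n + 1))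
  + 1 / (4 (n + 1))`.
Once `∑ a k = π - log 16` is known, the right-hand side tends to `γ`. It is strictly decreasing
in `n` by the bound `π (c N)² < 4 / (4N + 1)` (the sequence `(4N + 1) (c N)²` increases to `4 / π`
by Wallis' product) and `log (1 + 1 / N) ≥ 2 / (2N + 1) + 2 / (3 (2N + 1)³)`; hence it stays
above `γ`.

The value of `∑ a k` comes from the complete elliptic integral
`2 K(m) = ∫_0^π (1 - m sin² t)^(-1/2) dt = ∑ π (c k)² m ^ k`. By Abel's theorem `∑ a k` is the
limit of `π - 2 K(m) - log (1 - m)` as `m → 1⁻`, and `2 K(m) + log (1 - m) → log 16`: splitting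
the integrand along `1 = (1 - sin t) + sin t`, the second part integrates in closed form and the
first converges to `∫_0^π |cos t| / (1 + sin t) dt = 2 log 2`.
-/

open Filter Finset Real Topology intervalIntegral MeasureTheory

namespace Landau

/-- `coeff k = (2k choose k) / 4 ^ k`, written as the product given by `integral_sin_pow_even`. -/
noncomputable def coeff (k : ℕ) : ℝ := ∏ i ∈ range k, (2 * (i : ℝ) + 1) / (2 * i + 2)

@[simp] lemma coeff_zero : coeff 0 = 1 := by simp [coeff]

lemma coeff_succ (k : ℕ) : coeff (k + 1) = coeff k * ((2 * k + 1) / (2 * k + 2)) :=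
  prod_range_succ _ _

lemma coeff_pos (k : ℕ) : 0 < coeff k :=
  prod_pos fun _ _ => by positivity

lemma coeff_le_one (k : ℕ) : coeff k ≤ 1 :=
  prod_le_one (fun _ _ => by positivity) fun i _ => (div_le_one (by positivity)).2 (by linarith)

lemma choose_two_mul_self_div_four_pow (k : ℕ) :
    (Nat.choose (2 * k) k : ℝ) / 4 ^ k = coeff k := by
  induction k with
  | zero => simp
  | succ k ih =>
    have h : ((k : ℝ) + 1) * (Nat.choose (2 * (k + 1)) (k + 1) : ℝ)
        = 2 * (2 * k + 1) * (Nat.choose (2 * k) k : ℝ) := by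
      rw [← Nat.centralBinom_eq_two_mul_choose, ← Nat.centralBinom_eq_two_mul_choose]
      exact_mod_cast Nat.succ_mul_centralBinom_succ k
    rw [coeff_succ, ← ih]
    field_simp
    linear_combination 4 ^ k * 2 * h

lemma ascPochhammer_eval_one_half (k : ℕ) :
    (ascPochhammer ℝ k).eval (1 / 2) = (k.factorial : ℝ) * coeff k := by
  induction k with
  | zero => simp
  | succ k ih =>
    rw [ascPochhammer_succ_eval, ih, coeff_succ, Nat.factorial_succ]
    push_cast
    field_simp
    ring

lemma multichoose_one_half (k : ℕ) : Ring.multichoose (1 / 2 : ℝ) k = coeff k := by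
  rw [← nsmul_right_inj (Nat.factorial_ne_zero k),
    Ring.factorial_nsmul_multichoose_eq_ascPochhammer, Polynomial.ascPochhammer_smeval_eq_eval,
    ascPochhammer_eval_one_half, nsmul_eq_mul]

lemma hasSum_coeff_mul_pow {u : ℝ} (hu : |u| < 1) :
    HasSum (fun k => coeff k * u ^ k) (1 / √(1 - u)) := by
  have h := (one_div_one_sub_rpow_hasFPowerSeriesOnBall_zero (1 / 2)).hasSum
    (y := u) (by simpa [enorm_eq_nnnorm, ← NNReal.coe_lt_coe] using hu)
  simp only [FormalMultilinearSeries.ofScalars_apply_eq, zero_add, smul_eq_mul] at h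
  simpa only [← Ring.multichoose_eq, multichoose_one_half, sqrt_eq_rpow] using h

lemma wallis_W_eq_inv (k : ℕ) : Wallis.W k = ((2 * k + 1) * coeff k ^ 2)⁻¹ := by
  induction k with
  | zero => simp [Wallis.W]
  | succ k ih =>
    rw [Wallis.W_succ, ih, coeff_succ]
    push_cast
    field_simp
    ring

lemma two_div_le_pi_mul_coeff_sq (k : ℕ) : 2 / (2 * k + 1) ≤ π * coeff k ^ 2 := by
  have h := Wallis.W_le k
  rw [wallis_W_eq_inv, inv_le_comm₀ (by have := coeff_pos k; positivity) (by positivity), inv_div,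
    div_le_iff₀ pi_pos] at h
  rw [div_le_iff₀ (by positivity)]
  linarith

lemma strictMono_mul_coeff_sq : StrictMono fun k : ℕ => (4 * k + 1) * coeff k ^ 2 := by
  refine strictMono_nat_of_lt_succ fun k => ?_
  have hc := coeff_pos k
  rw [coeff_succ, ← sub_pos]
  push_cast
  have : (4 * (k + 1 : ℝ) + 1) * (coeff k * ((2 * k + 1) / (2 * k + 2))) ^ 2
      - (4 * k + 1) * coeff k ^ 2 = coeff k ^ 2 / (2 * k + 2) ^ 2 := by
    field_simp
    ring
  rw [this]
  positivity

lemma tendsto_mul_coeff_sq :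
    Tendsto (fun k : ℕ => (4 * k + 1) * coeff k ^ 2) atTop (𝓝 (4 / π)) := by
  have hratio : Tendsto (fun k : ℕ => (4 * k + 1 : ℝ) / (2 * k + 1)) atTop (𝓝 2) := by
    have h := tendsto_const_nhds (x := (2 : ℝ)) |>.sub <| tendsto_inv_atTop_zero.comp <|
      tendsto_atTop_add_const_right _ 1 <| tendsto_natCast_atTop_atTop.const_mul_atTop two_pos
    rw [sub_zero] at h
    refine h.congr fun k => ?_
    simp only [Function.comp_apply]
    field_simp
    ring
  rw [show 4 / π = (π / 2)⁻¹ * 2 by ring]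
  refine ((Wallis.tendsto_W_nhds_pi_div_two.inv₀ (by positivity)).mul hratio).congr fun k => ?_
  rw [wallis_W_eq_inv, inv_inv]
  field_simp

lemma pi_mul_coeff_sq_lt (k : ℕ) : π * coeff k ^ 2 < 4 / (4 * k + 1) := by
  have h := (strictMono_mul_coeff_sq (Nat.lt_succ_self k)).trans_le
    (strictMono_mul_coeff_sq.monotone.ge_of_tendsto tendsto_mul_coeff_sq (k + 1))
  rw [lt_div_iff₀ pi_pos] at h
  rw [lt_div_iff₀ (by positivity)]
  linarith

/-- `twiceEllipticK m = 2 K(m)`, for Legendre's complete elliptic integral `K` of parameter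
`m = k²`. -/
noncomputable def twiceEllipticK (m : ℝ) : ℝ := ∫ t in 0..π, 1 / √(1 - m * sin t ^ 2)

lemma one_sub_mul_sin_sq_pos {m : ℝ} (hm : m < 1) (t : ℝ) : 0 < 1 - m * sin t ^ 2 := by
  have := sin_sq_le_one t
  rcases le_or_gt m 0 with h | h <;> nlinarith [sq_nonneg (sin t)]

lemma integral_coeff_mul_mul_sin_sq_pow (m : ℝ) (k : ℕ) :
    ∫ t in 0..π, coeff k * (m * sin t ^ 2) ^ k = π * coeff k ^ 2 * m ^ k := by
  simp_rw [mul_pow, ← pow_mul, intervalIntegral.integral_const_mul, integral_sin_pow_even,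
    ← coeff.eq_def]
  ring

lemma hasSum_twiceEllipticK {m : ℝ} (hm : |m| < 1) :
    HasSum (fun k => π * coeff k ^ 2 * m ^ k) (twiceEllipticK m) := by
  simp_rw [← integral_coeff_mul_mul_sin_sq_pow]
  refine hasSum_integral_of_dominated_convergence (fun k _ => |m| ^ k)
    (fun k => (by fun_prop : Continuous _).aestronglyMeasurable) (fun k => ?_)
    (.of_forall fun _ _ => summable_geometric_of_lt_one (abs_nonneg m) hm)
    intervalIntegrable_const (.of_forall fun t _ => hasSum_coeff_mul_pow ?_)
  · refine .of_forall fun t _ => ?_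
    calc ‖coeff k * (m * sin t ^ 2) ^ k‖ = coeff k * (|m| * sin t ^ 2) ^ k := by
          rw [norm_mul, norm_pow, norm_mul, norm_of_nonneg (coeff_pos k).le,
            norm_of_nonneg (sq_nonneg _), norm_eq_abs]
      _ ≤ 1 * (|m| * 1) ^ k := by
          gcongr
          exacts [coeff_le_one k, sin_sq_le_one t]
      _ = |m| ^ k := by ring
  · rw [abs_mul, abs_of_nonneg (sq_nonneg (sin t))]
    exact (mul_le_of_le_one_right (abs_nonneg m) (sin_sq_le_one t)).trans_lt hm

lemma integral_sin_div_sqrt_one_sub_mul_sin_sq {m : ℝ} (hm₀ : 0 < m) (hm₁ : m < 1) :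
    ∫ t in 0..π, sin t / √(1 - m * sin t ^ 2) = 2 / √m * arsinh √(m / (1 - m)) := by
  have h1m : 0 < 1 - m := by linarith
  set b := √(m / (1 - m))
  have hb : b = √m / √(1 - m) := sqrt_div hm₀.le _
  have hderiv (t : ℝ) : HasDerivAt (fun t => -(√m)⁻¹ * arsinh (b * cos t))
      (sin t / √(1 - m * sin t ^ 2)) t := by
    have h := (((hasDerivAt_cos t).const_mul b).arsinh).const_mul (-(√m)⁻¹)
    refine h.congr_deriv ?_
    have hden : √(1 + (b * cos t) ^ 2) = √(1 - m * sin t ^ 2) / √(1 - m) := by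
      rw [← sqrt_div' _ h1m.le, mul_pow, sq_sqrt (div_nonneg hm₀.le h1m.le), sin_sq]
      congr 1
      field_simp
      ring
    have hden₀ := sqrt_pos.2 (one_sub_mul_sin_sq_pos hm₁ t)
    have h1m₀ := sqrt_pos.2 h1m
    rw [hden, hb, smul_eq_mul]
    field_simp
  rw [integral_eq_sub_of_hasDerivAt (fun t _ => hderiv t)]
  · simp only [cos_pi, cos_zero, mul_neg_one, mul_one, arsinh_neg]
    ring
  · exact (continuous_sin.div (by fun_prop) fun t =>
      (sqrt_pos.2 (one_sub_mul_sin_sq_pos hm₁ t)).ne').intervalIntegrable _ _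

lemma arsinh_sqrt_div_one_sub {m : ℝ} (hm₀ : 0 ≤ m) (hm₁ : m < 1) :
    arsinh √(m / (1 - m)) = log (1 + √m) - log (1 - m) / 2 := by
  have h1m : 0 < 1 - m := by linarith
  have hs : 0 < √(1 - m) := sqrt_pos.2 h1m
  have h : 1 + √(m / (1 - m)) ^ 2 = 1 / (1 - m) := by
    rw [sq_sqrt (div_nonneg hm₀ h1m.le)]
    field_simp
    ring
  rw [arsinh, h, sqrt_div hm₀, sqrt_div zero_le_one, sqrt_one, ← add_div,
    log_div (by positivity) hs.ne', log_sqrt h1m.le, add_comm]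

lemma integral_abs_cos_div_one_add_sin : ∫ t in 0..π, |cos t| / (1 + sin t) = 2 * log 2 := by
  set g := fun t => |cos t| / (1 + sin t)
  have hg : ContinuousOn g (Set.Icc 0 π) :=
    continuous_cos.abs.continuousOn.div (by fun_prop) fun t ht =>
      (by linarith [sin_nonneg_of_nonneg_of_le_pi ht.1 ht.2] : 1 + sin t ≠ 0)
  have hint (a b : ℝ) (ha : 0 ≤ a) (hb : b ≤ π) (hab : a ≤ b) : IntervalIntegrable g volume a b :=
    (hg.mono (by rw [Set.uIcc_of_le hab]; exact Set.Icc_subset_Icc ha hb)).intervalIntegrable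
  have hhalf : ∫ t in 0..π / 2, g t = log 2 := by
    have hderiv : ∀ t ∈ Set.uIcc 0 (π / 2), HasDerivAt (fun t => log (1 + sin t)) (g t) t := by
      intro t ht
      rw [Set.uIcc_of_le (by positivity)] at ht
      have h1 : 0 < 1 + sin t := by
        linarith [sin_nonneg_of_nonneg_of_le_pi ht.1 (by linarith [ht.2, pi_pos])]
      have hcos : 0 ≤ cos t := cos_nonneg_of_mem_Icc ⟨by linarith [ht.1, pi_pos], ht.2⟩
      simpa [g, abs_of_nonneg hcos] using ((hasDerivAt_sin t).const_add 1).log h1.ne'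
    rw [integral_eq_sub_of_hasDerivAt hderiv
      (hint _ _ le_rfl (by linarith [pi_pos]) (by positivity))]
    norm_num
  have hsymm : ∫ t in π / 2..π, g t = ∫ t in 0..π / 2, g t := by
    have h := integral_comp_sub_left g π (a := 0) (b := π / 2)
    rw [sub_zero, show π - π / 2 = π / 2 by ring] at h
    rw [← h]
    exact integral_congr fun t _ => by simp [g, sin_pi_sub, cos_pi_sub]
  rw [← integral_add_adjacent_intervals
    (hint 0 (π / 2) le_rfl (by linarith [pi_pos]) (by positivity))
    (hint (π / 2) π (by positivity) le_rfl (by linarith [pi_pos])), hsymm, hhalf]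
  ring

lemma tendsto_one_sub_sin_div_sqrt {t : ℝ} (ht : 0 ≤ sin t) :
    Tendsto (fun m => (1 - sin t) / √(1 - m * sin t ^ 2)) (𝓝[<] 1)
      (𝓝 (|cos t| / (1 + sin t))) := by
  have hpyth := sin_sq_add_cos_sq t
  rcases (sin_le_one t).eq_or_lt with hs | hs
  · have hc : cos t = 0 := by nlinarith
    simp [hs, hc]
  have hc : cos t ≠ 0 := fun hc => by nlinarith
  have hval : (1 - sin t) / √(1 - 1 * sin t ^ 2) = |cos t| / (1 + sin t) := by
    rw [one_mul, show 1 - sin t ^ 2 = cos t ^ 2 by linarith, sqrt_sq_eq_abs,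
      div_eq_div_iff (abs_pos.2 hc).ne' (by linarith), abs_mul_abs_self]
    linarith
  rw [← hval]
  refine (ContinuousAt.tendsto ?_).mono_left nhdsWithin_le_nhds
  refine continuousAt_const.div (by fun_prop) ?_
  rw [one_mul, sqrt_ne_zero']
  nlinarith

lemma tendsto_integral_one_sub_sin_div_sqrt :
    Tendsto (fun m => ∫ t in 0..π, (1 - sin t) / √(1 - m * sin t ^ 2)) (𝓝[<] 1)
      (𝓝 (2 * log 2)) := by
  have hm : ∀ᶠ m in 𝓝[<] (1 : ℝ), m ∈ Set.Ioo 0 1 := Ioo_mem_nhdsLT zero_lt_one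
  rw [← integral_abs_cos_div_one_add_sin]
  refine tendsto_integral_filter_of_dominated_convergence (fun _ => 1) ?_ ?_
    intervalIntegrable_const (.of_forall fun t ht => tendsto_one_sub_sin_div_sqrt ?_)
  · filter_upwards [hm] with m hm
    exact ((continuous_const.sub continuous_sin).div (by fun_prop) fun t =>
      (sqrt_pos.2 (one_sub_mul_sin_sq_pos hm.2 t)).ne').aestronglyMeasurable
  · filter_upwards [hm] with m hm
    refine .of_forall fun t ht => ?_
    rw [Set.uIoc_of_le pi_pos.le] at ht
    have hs₀ := sin_nonneg_of_nonneg_of_le_pi ht.1.le ht.2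
    have hs₁ := sin_le_one t
    have hden := sqrt_pos.2 (one_sub_mul_sin_sq_pos hm.2 t)
    rw [norm_of_nonneg (div_nonneg (by linarith) hden.le), div_le_one hden,
      le_sqrt (by linarith) (one_sub_mul_sin_sq_pos hm.2 t).le]
    nlinarith [hm.1, hm.2]
  · rw [Set.uIoc_of_le pi_pos.le] at ht
    exact sin_nonneg_of_nonneg_of_le_pi ht.1.le ht.2

lemma twiceEllipticK_add_log_one_sub {m : ℝ} (hm₀ : 0 < m) (hm₁ : m < 1) :
    twiceEllipticK m + log (1 - m) = (∫ t in 0..π, (1 - sin t) / √(1 - m * sin t ^ 2))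
      + (2 / √m * log (1 + √m) - (1 - m) * log (1 - m) / (√m * (1 + √m))) := by
  have hden (t : ℝ) : √(1 - m * sin t ^ 2) ≠ 0 := (sqrt_pos.2 (one_sub_mul_sin_sq_pos hm₁ t)).ne'
  have hsplit : twiceEllipticK m = (∫ t in 0..π, (1 - sin t) / √(1 - m * sin t ^ 2))
      + ∫ t in 0..π, sin t / √(1 - m * sin t ^ 2) := by
    have h₁ : Continuous fun t => (1 - sin t) / √(1 - m * sin t ^ 2) :=
      .div (by fun_prop) (by fun_prop) hden
    have h₂ : Continuous fun t => sin t / √(1 - m * sin t ^ 2) :=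
      .div (by fun_prop) (by fun_prop) hden
    rw [twiceEllipticK, ← integral_add (h₁.intervalIntegrable _ _) (h₂.intervalIntegrable _ _)]
    simp_rw [← add_div, sub_add_cancel]
  rw [hsplit, integral_sin_div_sqrt_one_sub_mul_sin_sq hm₀ hm₁, arsinh_sqrt_div_one_sub hm₀.le hm₁]
  generalize (∫ t in 0..π, (1 - sin t) / √(1 - m * sin t ^ 2)) = R
  have hs := sqrt_pos.2 hm₀
  have hsq := sq_sqrt hm₀.le
  field_simp
  linear_combination log (1 - m) * hsq

lemma tendsto_twiceEllipticK_add_log_one_sub :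
    Tendsto (fun m => twiceEllipticK m + log (1 - m)) (𝓝[<] 1) (𝓝 (log 16)) := by
  have hmul_log : ContinuousAt (fun m : ℝ => (1 - m) * log (1 - m)) 1 :=
    (continuous_mul_log.comp (continuous_const.sub continuous_id)).continuousAt
  have hg : ContinuousAt
      (fun m : ℝ => 2 / √m * log (1 + √m) - (1 - m) * log (1 - m) / (√m * (1 + √m))) 1 :=
    ((continuousAt_const.div (by fun_prop) (by norm_num)).mul
      ((by fun_prop : ContinuousAt (fun m : ℝ => 1 + √m) 1).log (by norm_num))).sub
      (hmul_log.div (by fun_prop) (by norm_num))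
  have hval : 2 * log 2 + (2 / √1 * log (1 + √1) - (1 - 1) * log (1 - 1) / (√1 * (1 + √1)))
      = log 16 := by
    rw [show (16 : ℝ) = 2 ^ 4 by norm_num, log_pow]
    norm_num
    ring
  rw [← hval]
  refine (tendsto_integral_one_sub_sin_div_sqrt.add
    (hg.tendsto.mono_left nhdsWithin_le_nhds)).congr' ?_
  filter_upwards [Ioo_mem_nhdsLT zero_lt_one] with m hm
  exact (twiceEllipticK_add_log_one_sub hm.1 hm.2).symm

noncomputable def harmonicDefect (k : ℕ) : ℝ := ((k : ℝ) + 1)⁻¹ - π * coeff (k + 1) ^ 2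

lemma harmonicDefect_nonneg (k : ℕ) : 0 ≤ harmonicDefect k := by
  have h := pi_mul_coeff_sq_lt (k + 1)
  have : 4 / (4 * ((k + 1 : ℕ) : ℝ) + 1) ≤ ((k : ℝ) + 1)⁻¹ := by
    rw [div_le_iff₀ (by positivity)]
    push_cast
    field_simp
    linarith
  rw [harmonicDefect]
  linarith

lemma harmonicDefect_le (k : ℕ) : harmonicDefect k ≤ ((k : ℝ) + 1)⁻¹ ^ 2 := by
  have h := two_div_le_pi_mul_coeff_sq (k + 1)
  have : ((k : ℝ) + 1)⁻¹ - ((k : ℝ) + 1)⁻¹ ^ 2 ≤ 2 / (2 * ((k + 1 : ℕ) : ℝ) + 1) := by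
    push_cast
    rw [le_div_iff₀ (by positivity)]
    field_simp
    nlinarith
  rw [harmonicDefect]
  linarith

lemma summable_harmonicDefect : Summable harmonicDefect := by
  refine .of_nonneg_of_le harmonicDefect_nonneg harmonicDefect_le ?_
  simpa [Nat.cast_add] using (summable_nat_add_iff 1).2 (Real.summable_nat_pow_inv.2 one_lt_two)

lemma hasSum_harmonicDefect_mul_pow {x : ℝ} (hx : |x| < 1) :
    HasSum (fun k => harmonicDefect k * x ^ (k + 1)) (π - (twiceEllipticK x + log (1 - x))) := by
  have hK := (hasSum_nat_add_iff' 1).2 (hasSum_twiceEllipticK hx)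
  simp only [range_one, sum_singleton, coeff_zero, one_pow, pow_zero, mul_one] at hK
  rw [show π - (twiceEllipticK x + log (1 - x)) = -log (1 - x) - (twiceEllipticK x - π) by ring]
  refine ((hasSum_pow_div_log_of_abs_lt_one hx).sub hK).congr_fun fun k => ?_
  simp only [harmonicDefect]
  ring

lemma hasSum_harmonicDefect : HasSum harmonicDefect (π - log 16) := by
  have habel := Real.tendsto_tsum_powerSeries_nhdsWithin_lt
    summable_harmonicDefect.hasSum.tendsto_sum_nat
  have h₁ : Tendsto (fun x => x * ∑' k, harmonicDefect k * x ^ k) (𝓝[<] 1)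
      (𝓝 (∑' k, harmonicDefect k)) := by
    simpa using (tendsto_id.mono_left nhdsWithin_le_nhds).mul habel
  have h₂ : Tendsto (fun x => π - (twiceEllipticK x + log (1 - x))) (𝓝[<] 1) (𝓝 (π - log 16)) :=
    tendsto_twiceEllipticK_add_log_one_sub.const_sub π
  have heq : ∀ᶠ x in 𝓝[<] (1 : ℝ), x * ∑' k, harmonicDefect k * x ^ k
      = π - (twiceEllipticK x + log (1 - x)) := by
    filter_upwards [Ioo_mem_nhdsLT (show (-1 : ℝ) < 1 by norm_num)] with x hx
    rw [← (hasSum_harmonicDefect_mul_pow (abs_lt.2 hx)).tsum_eq, ← tsum_mul_left]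
    simp_rw [pow_succ]
    ring_nf
  rw [← tendsto_nhds_unique (h₁.congr' heq) h₂]
  exact summable_harmonicDefect.hasSum

lemma landauG_eq_sum_coeff_sq (n : ℕ) : landauG n = ∑ k ∈ range (n + 1), coeff k ^ 2 := by
  simp only [landauG, choose_two_mul_self_div_four_pow]

lemma pi_mul_landauG (n : ℕ) :
    π * landauG n = π + harmonic n - ∑ k ∈ range n, harmonicDefect k := by
  rw [landauG_eq_sum_coeff_sq, mul_sum, sum_range_succ', coeff_zero]
  simp only [harmonicDefect, sum_sub_distrib, harmonic, Rat.cast_sum, Rat.cast_inv, Nat.cast_succ,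
    Rat.cast_add, Rat.cast_natCast, Rat.cast_one]
  ring

noncomputable def landauGap (n : ℕ) : ℝ := π * landauG n - log (16 * (n + 1)) + 1 / (4 * (n + 1))

lemma landauGap_eq (n : ℕ) : landauGap n =
    (π - log 16 - ∑ k ∈ range n, harmonicDefect k) + eulerMascheroniSeq n + 1 / (4 * (n + 1)) := by
  rw [landauGap, pi_mul_landauG, eulerMascheroniSeq, log_mul (by norm_num) (by positivity)]
  ring

lemma tendsto_landauGap : Tendsto landauGap atTop (𝓝 eulerMascheroniConstant) := by
  have h₁ := hasSum_harmonicDefect.tendsto_sum_nat.const_sub (π - log 16)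
  have h₂ : Tendsto (fun n : ℕ => 1 / (4 * ((n : ℝ) + 1))) atTop (𝓝 0) := by
    simpa [div_eq_mul_inv] using tendsto_one_div_add_atTop_nhds_zero_nat.div_const (4 : ℝ)
  have h := (h₁.add tendsto_eulerMascheroniSeq).add h₂
  rw [sub_self, zero_add, add_zero] at h
  exact h.congr fun n => (landauGap_eq n).symm

lemma le_log_one_add_inv {a : ℝ} (ha : 0 < a) :
    2 / (2 * a + 1) + 2 / (3 * (2 * a + 1) ^ 3) ≤ log (1 + a⁻¹) := by
  have h := sum_le_hasSum (range 2) (fun k _ => by positivity) (hasSum_log_one_add_inv ha)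
  norm_num [sum_range_succ] at h
  exact (le_of_eq (by field_simp)).trans h

lemma strictAnti_landauGap : StrictAnti landauGap := by
  refine strictAnti_nat_of_succ_lt fun n => ?_
  set N : ℝ := n + 1 with hN
  have hN0 : 0 < N := by positivity
  have hc := pi_mul_coeff_sq_lt (n + 1)
  have hlog := le_log_one_add_inv hN0
  have hG : landauG (n + 1) = landauG n + coeff (n + 1) ^ 2 := by
    simp only [landauG_eq_sum_coeff_sq, sum_range_succ _ (n + 1)]
  have hlog16 : log (16 * (N + 1)) = log (16 * N) + log (1 + N⁻¹) := by
    rw [← log_mul (by positivity) (by positivity)]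
    congr 1
    field_simp
  have key : 4 / (4 * N + 1) ≤
      2 / (2 * N + 1) + 2 / (3 * (2 * N + 1) ^ 3) + (1 / (4 * N) - 1 / (4 * (N + 1))) := by
    rw [← sub_nonneg]
    have : 2 / (2 * N + 1) + 2 / (3 * (2 * N + 1) ^ 3) + (1 / (4 * N) - 1 / (4 * (N + 1)))
        - 4 / (4 * N + 1) = (8 * N ^ 3 + 28 * N ^ 2 + 14 * N + 3)
          / (12 * N * (N + 1) * (4 * N + 1) * (2 * N + 1) ^ 3) := by
      field_simp
      ring
    rw [this]
    positivity
  simp only [landauGap, hG, Nat.cast_succ, ← hN, hlog16] at hc ⊢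
  linarith

end Landau

theorem landau_lower_bound_order_one (n : ℕ) :
    Real.log (16 * ((n : ℝ) + 1)) + Real.eulerMascheroniConstant - 1 / (4 * ((n : ℝ) + 1)) <
      Real.pi * landauG n := by
  have h := (Landau.strictAnti_landauGap.antitone.le_of_tendsto Landau.tendsto_landauGap
    (n + 1)).trans_lt (Landau.strictAnti_landauGap n.lt_succ_self)
  rw [Landau.landauGap] at h
  linarith
end

section
/- Let \varepsilon_l(N) be a real sequence (N ranging over positive integers) with \varepsilon_l(N) \to 0 as N \to \infty, satisfying \varepsilon_l(N+1) - (2 - 1/N + 1/(4N^2))\varepsilon_l(N) + (1 - 1/(2N))^2 \varepsilon_l(N-1) = R(N) for N \ge 2 where R(N) > 0 for all N \ge 2, and suppose \varepsilon_l(N) > 0 for all sufficiently large N. Then \varepsilon_l(N) > 0 for all N \ge 2. -/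
open Filter

/-! The differences `ε (N + 1) - ε N` satisfy `d N = (1 - 1/(2N))^2 d (N - 1) + R N` with `R > 0`,
so once a difference is positive all later ones are. If `ε` were nonpositive somewhere past `2`,
eventual positivity gives a sign change `ε K ≤ 0 < ε (K + 1)`; from there `ε` strictly increases,
which forces `ε (K + 1) < lim ε = 0`. -/

lemma exists_not_and_succ_of_eventually {p : ℕ → Prop} {M : ℕ} (hM : ¬ p M)
    (hp : ∀ᶠ n in atTop, p n) : ∃ K ≥ M, ¬ p K ∧ p (K + 1) := by
  by_contra! h
  have hnot : ∀ n ≥ M, ¬ p n := fun n hn =>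
    Nat.le_induction hM (fun k hk hpk => h k hk hpk) n hn
  obtain ⟨n, hpn, hn⟩ := (hp.and (eventually_ge_atTop M)).exists
  exact hnot n hn hpn

lemma forall_pos_of_linear_recurrence {d b r : ℕ → ℝ} {K : ℕ}
    (hrec : ∀ n ≥ K, d (n + 1) = b n * d n + r n) (hb : ∀ n ≥ K, 0 ≤ b n)
    (hr : ∀ n ≥ K, 0 < r n) (hK : 0 < d K) : ∀ n ≥ K, 0 < d n := by
  refine fun n hn => Nat.le_induction hK (fun k hk hdk => ?_) n hn
  rw [hrec k hk]
  exact add_pos_of_nonneg_of_pos (mul_nonneg (hb k hk) hdk.le) (hr k hk)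

lemma lt_of_tendsto_of_forall_lt_succ {u : ℕ → ℝ} {a : ℝ} {K : ℕ}
    (hu : Tendsto u atTop (nhds a)) (hinc : ∀ n ≥ K, u n < u (n + 1)) : u K < a := by
  have hmono : StrictMono fun n => u (n + K) :=
    strictMono_nat_of_lt_succ fun n => by simpa [Nat.add_right_comm] using hinc (n + K) le_add_self
  have hshift : Tendsto (fun n => u (n + K)) atTop (nhds a) :=
    (tendsto_add_atTop_iff_nat K).mpr hu
  calc u K = u (0 + K) := by rw [zero_add]
    _ < u (1 + K) := hmono zero_lt_one
    _ ≤ a := hmono.monotone.ge_of_tendsto hshift 1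

lemma recurrence_coeff_eq {x : ℝ} (hx : x ≠ 0) :
    2 - 1 / x + 1 / (4 * x ^ 2) = 1 + (1 - 1 / (2 * x)) ^ 2 := by
  field_simp
  ring

theorem maximum_principle_difference_equation (ε R : ℕ → ℝ)
    (hlim : Tendsto ε atTop (nhds 0))
    (heq : ∀ N : ℕ, 2 ≤ N →
      ε (N + 1) - (2 - 1 / (N : ℝ) + 1 / (4 * (N : ℝ) ^ 2)) * ε N
        + (1 - 1 / (2 * (N : ℝ))) ^ 2 * ε (N - 1) = R N)
    (hR : ∀ N : ℕ, 2 ≤ N → 0 < R N)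
    (hpos : ∀ᶠ N in atTop, 0 < ε N) :
    ∀ N : ℕ, 2 ≤ N → 0 < ε N := by
  intro M hM
  by_contra hεM
  obtain ⟨K, hKM, hεK, hεK1⟩ := exists_not_and_succ_of_eventually hεM hpos
  have hdiff : ∀ n ≥ K, ε (n + 2) - ε (n + 1)
      = (1 - 1 / (2 * ((n + 1 : ℕ) : ℝ))) ^ 2 * (ε (n + 1) - ε n) + R (n + 1) := by
    intro n hn
    have h := heq (n + 1) (by omega)
    rw [recurrence_coeff_eq (by positivity), Nat.add_sub_cancel] at h
    linarith
  have hinc : ∀ n ≥ K, 0 < ε (n + 1) - ε n :=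
    forall_pos_of_linear_recurrence hdiff (fun n _ => sq_nonneg _)
      (fun n hn => hR (n + 1) (by omega)) (by linarith [not_lt.mp hεK])
  have hneg : ε (K + 1) < 0 :=
    lt_of_tendsto_of_forall_lt_succ hlim fun n hn => sub_pos.mp (hinc n (by omega))
  exact hneg.not_gt hεK1
end
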